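/- Let K be a field, d a positive integer, and G a finite subgroup of the general linear group GL_d(K) such that the order of G is not divisible by the characteristic of K and is coprime to d!. Then G is commutative. -/

import Mathlib

/-!
After base change to an algebraic closure `L` of `K`, `G` acts faithfully on `L^d` by
semisimple operators, their orders being invertible in `L`. For an abelian subgroup `A ≤ G`,
`L^d` is the sum of at most `d` nonzero joint eigenspaces, indexed by characters `A → L`. The
normalizer of `A` permutes these characters; an orbit has size at most `d` and dividing `|G|`,
so it is a single point, and the normalizer centralizes `A`.

A finite group in which normalizers of abelian subgroups centralize them is abelian. Its Sylow
subgroups are abelian: in a nonabelian `p`-group, an element of the second centre outside the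
centre generates, together with the centre, an abelian normal subgroup that is not central.
Burnside's transfer theorem then shows that no prime divides the order of a commutator.
-/

open Module Subgroup
open scoped Nat commutatorElement

theorem MulAction.smul_eq_self_of_ncard_orbit_le {H X : Type*} [Group H] [Finite H]
    [MulAction H X] {x : X} {D : ℕ} (hcop : (Nat.card H).Coprime D !)
    (hx : (orbit H x).ncard ≤ D) (h : H) : h • x = x := by
  have hpos : 0 < (stabilizer H x).index := Nat.pos_of_ne_zero index_ne_zero_of_finite
  have hdvd : (stabilizer H x).index ∣ D ! :=
    Nat.dvd_factorial hpos ((index_stabilizer H x).trans_le hx)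
  have hidx : (stabilizer H x).index = 1 :=
    (hcop.coprime_dvd_right hdvd).symm.eq_one_of_dvd (index_dvd_card _)
  exact mem_stabilizer_iff.mp (index_eq_one.mp hidx ▸ mem_top h)

section GroupTheory

variable {Γ : Type*} [Group Γ]

theorem Subgroup.normalizer_le_centralizer_of_subgroup
    (h : ∀ A : Subgroup Γ, IsMulCommutative A → normalizer (A : Set Γ) ≤ centralizer A)
    (H : Subgroup Γ) :
    ∀ A : Subgroup H, IsMulCommutative A → normalizer (A : Set H) ≤ centralizer A := by
  intro A hA x hx
  have hx' := h (A.map H.subtype) inferInstance (le_normalizer_map H.subtype ⟨x, hx, rfl⟩)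
  rw [mem_centralizer_iff] at hx' ⊢
  exact fun y hy => Subtype.ext (hx' y ⟨y, hy, rfl⟩)

theorem IsPGroup.exists_notMem_center_forall_commutatorElement_mem_center {p : ℕ}
    [Fact p.Prime] [Finite Γ] (hΓ : IsPGroup p Γ) (hZ : center Γ ≠ ⊤) :
    ∃ w ∉ center Γ, ∀ g : Γ, ⁅g, w⁆ ∈ center Γ := by
  have : Nontrivial (Γ ⧸ center Γ) := QuotientGroup.nontrivial_iff.mpr hZ
  have := (hΓ.to_quotient (center Γ)).center_nontrivial
  obtain ⟨⟨q, hq⟩, hq1⟩ := exists_ne (1 : center (Γ ⧸ center Γ))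
  obtain ⟨w, rfl⟩ := QuotientGroup.mk_surjective q
  refine ⟨w, fun hw => hq1 (Subtype.ext ((QuotientGroup.eq_one_iff w).mpr hw)), fun g => ?_⟩
  rw [← QuotientGroup.eq_one_iff, ← QuotientGroup.mk'_apply, map_commutatorElement,
    commutatorElement_eq_one_iff_mul_comm]
  exact mem_center_iff.mp hq _

theorem IsPGroup.isMulCommutative_of_normalizer_le_centralizer {p : ℕ} [Fact p.Prime]
    [Finite Γ] (hΓ : IsPGroup p Γ)
    (h : ∀ A : Subgroup Γ, IsMulCommutative A → normalizer (A : Set Γ) ≤ centralizer A) :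
    IsMulCommutative Γ := by
  rw [← center_eq_top_iff]
  by_contra hZ
  obtain ⟨w, hw, hwZ⟩ := hΓ.exists_notMem_center_forall_commutatorElement_mem_center hZ
  set A := closure (insert w (center Γ : Set Γ))
  have hA : IsMulCommutative A := isMulCommutative_closure <| by
    rintro x (rfl | hx) y (rfl | hy)
    · rfl
    · exact mem_center_iff.mp hy x
    · exact (mem_center_iff.mp hx y).symm
    · exact mem_center_iff.mp hy x
  have hnorm : (⊤ : Subgroup Γ) ≤ normalizer (A : Set Γ) := le_normalizer_closure_iff.mpr <| by
    rintro g - x (rfl | hx)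
    · rw [show g * x * g⁻¹ = ⁅g, x⁆ * x by group]
      exact mul_mem (subset_closure (Or.inr (hwZ g))) (subset_closure (Or.inl rfl))
    · rw [mem_center_iff.mp hx g, mul_inv_cancel_right]
      exact subset_closure (Or.inr hx)
  refine hw (mem_center_iff.mpr fun g => ?_)
  exact (mem_centralizer_iff.mp (h A hA (hnorm (mem_top g))) w (subset_closure (Or.inl rfl))).symm

theorem Sylow.not_dvd_orderOf_commutatorElement {p : ℕ} [Fact p.Prime] [Finite Γ]
    (P : Sylow p Γ) (hP : normalizer (P : Set Γ) ≤ centralizer P) (a b : Γ) :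
    ¬ p ∣ orderOf ⁅a, b⁆ := by
  have hker : ⁅a, b⁆ ∈ (MonoidHom.transferSylow P hP).ker := by
    rw [MonoidHom.mem_ker, map_commutatorElement, commutatorElement_eq_one_iff_mul_comm]
    exact Subtype.ext (mem_centralizer_iff.mp (hP (le_normalizer (SetLike.coe_mem _))) _
      (SetLike.coe_mem _))
  intro hp
  refine MonoidHom.not_dvd_card_ker_transferSylow P hP (hp.trans ?_)
  rw [← orderOf_mk _ hker]
  exact orderOf_dvd_natCard _

theorem isMulCommutative_of_normalizer_le_centralizer [Finite Γ]
    (h : ∀ A : Subgroup Γ, IsMulCommutative A → normalizer (A : Set Γ) ≤ centralizer A) :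
    IsMulCommutative Γ := by
  refine ⟨⟨fun a b => ?_⟩⟩
  suffices orderOf ⁅a, b⁆ = 1 from
    commutatorElement_eq_one_iff_mul_comm.mp (orderOf_eq_one_iff.mp this)
  refine Nat.eq_one_iff_not_exists_prime_dvd.mpr fun p hp => ?_
  have : Fact p.Prime := ⟨hp⟩
  obtain ⟨P⟩ : Nonempty (Sylow p Γ) := inferInstance
  have : IsMulCommutative P := P.isPGroup'.isMulCommutative_of_normalizer_le_centralizer
    (normalizer_le_centralizer_of_subgroup h P)
  exact P.not_dvd_orderOf_commutatorElement (h P this) a b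

end GroupTheory

open Polynomial in
theorem Module.End.isSemisimple_of_pow_eq_one {K V : Type*} [Field K] [AddCommGroup V]
    [Module K V] {f : End K V} {n : ℕ} (hf : f ^ n = 1) (hn : (n : K) ≠ 0) : f.IsSemisimple :=
  isSemisimple_of_squarefree_aeval_eq_zero (X_pow_sub_one_separable_iff.mpr hn).squarefree
    (by simp [hf])

namespace Representation

variable {L Γ V : Type*} [Field L] [Group Γ] [AddCommGroup V] [Module L V]
  (ρ : Representation L Γ V)

theorem isSemisimple_of_natCard_ne_zero [Finite Γ] (hΓ : (Nat.card Γ : L) ≠ 0) (g : Γ) :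
    End.IsSemisimple (ρ g) :=
  End.isSemisimple_of_pow_eq_one (by rw [← map_pow, pow_card_eq_one', map_one]) hΓ

def weightSpace (χ : Γ → L) : Submodule L V :=
  ⨅ g, End.eigenspace (ρ g) (χ g)

theorem mem_weightSpace {χ : Γ → L} {x : V} : x ∈ ρ.weightSpace χ ↔ ∀ g, ρ g x = χ g • x := by
  simp [weightSpace]

theorem apply_eq_of_forall_weightSpace_ne_bot (hspan : ⨆ χ, ρ.weightSpace χ = ⊤) {g h : Γ}
    (hgh : ∀ χ, ρ.weightSpace χ ≠ ⊥ → χ g = χ h) : ρ g = ρ h := by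
  rw [← LinearMap.eqLocus_eq_top, eq_top_iff, ← hspan]
  refine iSup_le fun χ => ?_
  by_cases hχ : ρ.weightSpace χ = ⊥
  · simp [hχ]
  · intro x hx
    rw [mem_weightSpace] at hx
    rw [LinearMap.mem_eqLocus, hx, hx, hgh χ hχ]

section Commutative

variable [IsMulCommutative Γ]

theorem commute_apply (g h : Γ) : Commute (ρ g) (ρ h) := by
  rw [Commute, SemiconjBy, ← map_mul, ← map_mul, mul_comm' g h]

theorem iSupIndep_weightSpace : iSupIndep ρ.weightSpace :=
  (End.independent_iInf_maxGenEigenspace_of_forall_mapsTo _ fun g h μ =>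
    End.mapsTo_maxGenEigenspace_of_comm (ρ.commute_apply h g) μ).mono
    fun _ => iInf_mono fun _ => End.eigenspace_le_maxGenEigenspace

theorem iSup_weightSpace_eq_top [IsAlgClosed L] [FiniteDimensional L V]
    (hρ : ∀ g, End.IsSemisimple (ρ g)) : ⨆ χ, ρ.weightSpace χ = ⊤ := by
  have := End.iSup_iInf_maxGenEigenspace_eq_top_of_iSup_maxGenEigenspace_eq_top_of_commute
    (fun g => ρ g) (fun g h _ => ρ.commute_apply g h)
    (fun g => End.iSup_maxGenEigenspace_eq_top _)
  simpa only [weightSpace, (hρ _).isFinitelySemisimple.maxGenEigenspace_eq_eigenspace] using this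

end Commutative

section Normalizer

-- The normalizer of `A` acts on characters `χ : A → L` by `(n • χ) a = χ (n⁻¹ * a * n)`.
attribute [local instance] arrowAction

theorem apply_mem_weightSpace_smul {A : Subgroup Γ} (n : normalizer (A : Set Γ)) {χ : A → L}
    {x : V} (hx : x ∈ weightSpace (ρ.comp A.subtype) χ) :
    ρ n x ∈ weightSpace (ρ.comp A.subtype) (n • χ) := by
  rw [mem_weightSpace] at hx ⊢
  intro a
  have hconj : (a : Γ) * n = n * ↑(n⁻¹ • a) := by
    change (a : Γ) * n = n * ((n : Γ)⁻¹ * a * ((n : Γ)⁻¹)⁻¹)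
    group
  simp only [MonoidHom.comp_apply, coe_subtype] at hx ⊢
  rw [← Module.End.mul_apply, ← map_mul, hconj, map_mul, Module.End.mul_apply, hx, map_smul]
  rfl

theorem weightSpace_smul_ne_bot {A : Subgroup Γ} (n : normalizer (A : Set Γ)) {χ : A → L}
    (hχ : weightSpace (ρ.comp A.subtype) χ ≠ ⊥) :
    weightSpace (ρ.comp A.subtype) (n • χ) ≠ ⊥ := by
  obtain ⟨x, hx, hx0⟩ := (Submodule.ne_bot_iff _).mp hχ
  refine (Submodule.ne_bot_iff _).mpr ⟨ρ n x, ρ.apply_mem_weightSpace_smul n hx, fun h => hx0 ?_⟩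
  simpa [h] using (ρ.inv_self_apply n x).symm

theorem normalizer_le_centralizer_of_injective [Finite Γ] [IsAlgClosed L]
    [FiniteDimensional L V] (hρ : Function.Injective ρ) (hchar : (Nat.card Γ : L) ≠ 0)
    (hcop : (Nat.card Γ).Coprime (finrank L V)!) (A : Subgroup Γ) [IsMulCommutative A] :
    normalizer (A : Set Γ) ≤ centralizer A := by
  intro n hn
  let σ : Representation L A V := ρ.comp A.subtype
  have hweights : {χ | σ.weightSpace χ ≠ ⊥}.Finite :=
    Submodule.finite_ne_bot_of_iSupIndep σ.iSupIndep_weightSpace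
  have hcard : {χ | σ.weightSpace χ ≠ ⊥}.ncard ≤ finrank L V := by
    have := σ.iSupIndep_weightSpace.fintypeNeBotOfFiniteDimensional
    rw [← Nat.card_coe_set_eq]
    exact (Nat.card_eq_fintype_card (α := {χ // σ.weightSpace χ ≠ ⊥})).trans_le
      σ.iSupIndep_weightSpace.subtype_ne_bot_le_finrank
  have hfix (χ : A → L) (hχ : σ.weightSpace χ ≠ ⊥) :
      (⟨n, hn⟩ : normalizer (A : Set Γ)) • χ = χ :=
    MulAction.smul_eq_self_of_ncard_orbit_le (hcop.coprime_dvd_left (card_subgroup_dvd_card _))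
      ((Set.ncard_le_ncard (by rintro _ ⟨m, rfl⟩; exact ρ.weightSpace_smul_ne_bot m hχ)
        hweights).trans hcard) _
  rw [mem_centralizer_iff]
  intro a ha
  have hspan := σ.iSup_weightSpace_eq_top fun a => ρ.isSemisimple_of_natCard_ne_zero hchar a
  have hconj := hρ (σ.apply_eq_of_forall_weightSpace_ne_bot hspan
    (g := (⟨n, hn⟩ : normalizer (A : Set Γ))⁻¹ • ⟨a, ha⟩) (h := ⟨a, ha⟩)
    fun χ hχ => congrFun (hfix χ hχ) ⟨a, ha⟩)
  change n⁻¹ * a * n⁻¹⁻¹ = a at hconj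
  rwa [inv_inv, mul_assoc, inv_mul_eq_iff_eq_mul] at hconj

end Normalizer

end Representation

theorem finite_subgroup_GL_coprime_factorial_comm_general
    (K : Type*) [Field K] (d : ℕ)
    (G : Subgroup (Matrix.GeneralLinearGroup (Fin d) K)) [Fintype G]
    (hchar : ¬ ringChar K ∣ Fintype.card G)
    (hcop : Nat.Coprime (Fintype.card G) (Nat.factorial d)) :
    ∀ a b : G, a * b = b * a := by
  let L := AlgebraicClosure K
  let ρ : Representation L G (Fin d → L) :=
    (Matrix.toLinAlgEquiv' : Matrix (Fin d) (Fin d) L ≃ₐ[L] _).toRingEquiv.toMonoidHom.comp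
      ((Units.coeHom _).comp ((Matrix.GeneralLinearGroup.map (algebraMap K L)).comp G.subtype))
  have hρ : Function.Injective ρ :=
    Matrix.toLinAlgEquiv'.injective.comp <| Units.val_injective.comp <|
      (Units.map_injective (Matrix.map_injective (algebraMap K L).injective)).comp
        Subtype.val_injective
  have hcharL : (Nat.card G : L) ≠ 0 := by
    rw [← map_natCast (algebraMap K L), _root_.map_ne_zero, Nat.card_eq_fintype_card, Ne,
      ringChar.spec]
    exact hchar
  have hcopL : (Nat.card G).Coprime (finrank L (Fin d → L))! := by
    rwa [finrank_fin_fun, Nat.card_eq_fintype_card]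
  have := isMulCommutative_of_normalizer_le_centralizer
    (ρ.normalizer_le_centralizer_of_injective hρ hcharL hcopL)
  exact mul_comm'

/-- **Kollár's lemma** (paper, Lemma 5.x): a finite subgroup of `GL_d(K)` whose order is
not divisible by the characteristic of `K` and is coprime to `d!` is commutative. -/
theorem finite_subgroup_GL_coprime_factorial_comm
    (K : Type*) [Field K] (d : ℕ) (hd : 0 < d)
    (G : Subgroup (Matrix.GeneralLinearGroup (Fin d) K)) [Fintype G]
    (hchar : ¬ ringChar K ∣ Fintype.card G)
    (hcop : Nat.Coprime (Fintype.card G) (Nat.factorial d)) :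
    ∀ a b : G, a * b = b * a :=
  finite_subgroup_GL_coprime_factorial_comm_general K d G hchar hcop
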